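/- arXiv:2109.01022 — 7 statements merged into one kernel-verified Lean document; each statement's English description precedes it below -/
import Mathlib

section
/- Let N ≥ 2 be a natural number and let angles 0 = θ₁ < θ₂ < … < θ_N < π be given. Then ⋂_{k=1}^{N} 𝓝 R_{θ_k}ᵀ = SO(2) if and only if there exists n ∈ {1,…,N−1} such that θ_n ≤ π/2 ≤ θ_{n+1} and θ_{n+1} − θ_n ≤ π/2. -/
open Matrix Real Set MeasureTheory

noncomputable section

/-- The space of real 2×2 matrices. -/
abbrev M2 : Type := Matrix (Fin 2) (Fin 2) ℝ

/-- Euclidean norm on ℝ². -/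
def enorm2 (v : Fin 2 → ℝ) : ℝ := Real.sqrt ((v 0) ^ 2 + (v 1) ^ 2)

/-- Rotation matrix by angle θ. -/
def rot (θ : ℝ) : M2 := !![Real.cos θ, -Real.sin θ; Real.sin θ, Real.cos θ]

/-- The set of rotations SO(2). -/
def SO2 : Set M2 := {R : M2 | ∃ θ : ℝ, R = rot θ}

def e1 : Fin 2 → ℝ := ![1, 0]
def e2 : Fin 2 → ℝ := ![0, 1]

/-- Perpendicular vector w⊥ = (−w₂, w₁). -/
def perp (w : Fin 2 → ℝ) : Fin 2 → ℝ := ![-(w 1), w 0]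

/-- 𝓜_s = {F : det F = 1 and ‖F s‖ = 1}. -/
def calM (s : Fin 2 → ℝ) : Set M2 := {F : M2 | F.det = 1 ∧ enorm2 (F.mulVec s) = 1}

/-- 𝓝_s = {F : det F = 1 and ‖F s‖ ≤ 1}. -/
def calN (s : Fin 2 → ℝ) : Set M2 := {F : M2 | F.det = 1 ∧ enorm2 (F.mulVec s) ≤ 1}

/-!
With `FᵀF = [[a, b], [b, c]]` one has `‖F R_θ e₁‖² = m + r cos (2θ - γ)`, where `m = (a + c)/2`
and `m² = r² + (det F)²`; for `det F = 1` this is `≡ 1` when `F ∈ SO(2)` and has `m > 1`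
otherwise. So a non-rotation in the intersection exists iff all the points `2θ_k` lie in an open
half circle `{φ : cos (φ - γ) < 0}`; given such a half circle, stretch along the direction `γ/2`.
The points `0 = 2θ_1 < … < 2θ_N < 2π` lie in no open half circle iff every circular gap is at
most `π`, and the gap condition of the theorem says exactly this for the gap containing `π`,
the others being automatically shorter.
-/

namespace TaylorBound

lemma det_rot (ψ : ℝ) : (rot ψ).det = 1 := by
  rw [rot, det_fin_two_of]
  nlinarith [sin_sq_add_cos_sq ψ]

lemma rot_mul_rot (a b : ℝ) : rot a * rot b = rot (a + b) := by
  ext i j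
  fin_cases i <;> fin_cases j <;>
    simp [rot, mul_apply, Fin.sum_univ_two, cos_add, sin_add] <;> ring

lemma rot_col_sq (ψ : ℝ) : rot ψ 0 0 ^ 2 + rot ψ 1 0 ^ 2 = 1 := by
  simp [rot, cos_sq_add_sin_sq]

lemma mul_rot_apply_zero_zero (F : M2) (θ : ℝ) :
    (F * rot θ) 0 0 = F 0 0 * cos θ + F 0 1 * sin θ := by
  simp [rot, mul_apply, Fin.sum_univ_two]

lemma mul_rot_apply_one_zero (F : M2) (θ : ℝ) :
    (F * rot θ) 1 0 = F 1 0 * cos θ + F 1 1 * sin θ := by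
  simp [rot, mul_apply, Fin.sum_univ_two]

lemma mem_calN_e1_iff (G : M2) : G ∈ calN e1 ↔ G.det = 1 ∧ G 0 0 ^ 2 + G 1 0 ^ 2 ≤ 1 := by
  simp [calN, enorm2, e1, mulVec, dotProduct, Fin.sum_univ_two]

lemma exists_polar (p q : ℝ) :
    ∃ r γ, 0 ≤ r ∧ r ^ 2 = p ^ 2 + q ^ 2 ∧ r * cos γ = p ∧ r * sin γ = q := by
  refine ⟨‖(⟨p, q⟩ : ℂ)‖, Complex.arg ⟨p, q⟩, norm_nonneg _, ?_,
    Complex.norm_mul_cos_arg _, Complex.norm_mul_sin_arg _⟩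
  rw [Complex.sq_norm, Complex.normSq_mk]
  ring

lemma mem_SO2_of_orthonormal {F : M2} (hdet : F.det = 1) (h0 : F 0 0 ^ 2 + F 1 0 ^ 2 = 1)
    (h01 : F 0 0 * F 0 1 + F 1 0 * F 1 1 = 0) : F ∈ SO2 := by
  obtain ⟨r, ψ, hr, hr2, hcos, hsin⟩ := exists_polar (F 0 0) (F 1 0)
  have hr1 : r = 1 := by nlinarith
  rw [det_fin_two] at hdet
  subst hr1
  refine ⟨ψ, ?_⟩
  ext i j
  fin_cases i <;> fin_cases j <;> simp [rot]
  · linarith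
  · linear_combination (-F 0 1) * h0 + F 0 0 * h01 - F 1 0 * hdet + hsin
  · linarith
  · linear_combination (-F 1 1) * h0 + F 1 0 * h01 + F 0 0 * hdet - hcos

lemma SO2_subset_iInter {ι : Type*} (s : Finset ι) (θ : ι → ℝ) :
    SO2 ⊆ ⋂ k ∈ s, {F : M2 | F * rot (θ k) ∈ calN e1} := by
  rintro F ⟨ψ, rfl⟩
  simp only [mem_iInter₂, mem_ofPred_eq, rot_mul_rot, mem_calN_e1_iff]
  exact fun k _ => ⟨det_rot _, (rot_col_sq _).le⟩

/-- `m = (a + c)/2` and `(r cos γ, r sin γ) = ((a - c)/2, b)` for the Gram matrix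
`FᵀF = [[a, b], [b, c]]`, since `‖F R_θ e₁‖² = a cos² θ + 2b cos θ sin θ + c sin² θ`. -/
lemma exists_col_sq_mul_rot_eq {F : M2} (hdet : F.det = 1) (hF : F ∉ SO2) :
    ∃ m r γ, 1 < m ∧ 0 ≤ r ∧
      ∀ θ, (F * rot θ) 0 0 ^ 2 + (F * rot θ) 1 0 ^ 2 = m + r * cos (2 * θ - γ) := by
  set a := F 0 0 ^ 2 + F 1 0 ^ 2
  set b := F 0 0 * F 0 1 + F 1 0 * F 1 1
  set c := F 0 1 ^ 2 + F 1 1 ^ 2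
  have hgram : a * c - b ^ 2 = 1 := by
    rw [det_fin_two] at hdet
    linear_combination (F 0 0 * F 1 1 - F 0 1 * F 1 0 + 1) * hdet
  have hm : 1 < (a + c) / 2 := by
    by_contra! hm
    have ha : a = 1 := by nlinarith [sq_nonneg (a - c), sq_nonneg b]
    have hb : b = 0 := by nlinarith [sq_nonneg (a - c), sq_nonneg b]
    exact hF (mem_SO2_of_orthonormal hdet ha hb)
  obtain ⟨r, γ, hr, -, hcos, hsin⟩ := exists_polar ((a - c) / 2) b
  refine ⟨(a + c) / 2, r, γ, hm, hr, fun θ => ?_⟩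
  rw [mul_rot_apply_zero_zero, mul_rot_apply_one_zero, cos_sub, cos_two_mul, sin_two_mul]
  linear_combination c * sin_sq_add_cos_sq θ
    - (2 * cos θ ^ 2 - 1) * hcos - 2 * sin θ * cos θ * hsin

lemma exists_cos_neg_of_mem_iInter {ι : Type*} {s : Finset ι} {θ : ι → ℝ} {F : M2}
    (hF : F ∈ ⋂ k ∈ s, {G : M2 | G * rot (θ k) ∈ calN e1}) (hFSO2 : F ∉ SO2) :
    ∃ γ, ∀ k ∈ s, cos (2 * θ k - γ) < 0 := by
  simp only [mem_iInter₂, mem_ofPred_eq, mem_calN_e1_iff, det_mul, det_rot, mul_one] at hF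
  rcases s.eq_empty_or_nonempty with rfl | ⟨k₀, hk₀⟩
  · exact ⟨0, by simp⟩
  obtain ⟨m, r, γ, hm, hr, hcol⟩ := exists_col_sq_mul_rot_eq (hF k₀ hk₀).1 hFSO2
  refine ⟨γ, fun k hk => ?_⟩
  have hk := (hF k hk).2
  rw [hcol] at hk
  nlinarith

lemma exists_forall_le_neg {ι : Type*} (s : Finset ι) {f : ι → ℝ} (hf : ∀ i ∈ s, f i < 0) :
    ∃ η > 0, ∀ i ∈ s, f i ≤ -η := by
  rcases s.eq_empty_or_nonempty with rfl | hs
  · exact ⟨1, one_pos, by simp⟩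
  obtain ⟨j, hj, hmax⟩ := s.exists_max_image f hs
  exact ⟨-f j, neg_pos.2 (hf j hj), fun i hi => by simpa using hmax i hi⟩

/-- The witness stretches the direction `γ/2` by `1 + η` and shrinks the orthogonal one; the
uniform margin `η` is what makes one fixed stretch work for every `θ_k`. -/
lemma exists_mem_iInter_not_mem_SO2 {ι : Type*} {s : Finset ι} {θ : ι → ℝ} {γ : ℝ}
    (hγ : ∀ k ∈ s, cos (2 * θ k - γ) < 0) :
    ∃ F ∈ ⋂ k ∈ s, {G : M2 | G * rot (θ k) ∈ calN e1}, F ∉ SO2 := by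
  obtain ⟨η, hη, hηγ⟩ := exists_forall_le_neg s hγ
  set D : M2 := !![1 + η, 0; 0, (1 + η)⁻¹]
  have hD : D.det = 1 := by simp [D, det_fin_two_of]; field_simp
  have hDrot : ∀ φ, (D * rot φ) 0 0 ^ 2 + (D * rot φ) 1 0 ^ 2
      = (1 + η) ^ 2 * cos φ ^ 2 + ((1 + η)⁻¹) ^ 2 * sin φ ^ 2 := by
    intro φ
    simp [D, mul_rot_apply_zero_zero, mul_rot_apply_one_zero, mul_pow]
  refine ⟨D * rot (-(γ / 2)), ?_, ?_⟩
  · simp only [mem_iInter₂, mem_ofPred_eq, mem_calN_e1_iff, mul_assoc, rot_mul_rot, det_mul,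
      det_rot, hD, mul_one, hDrot, true_and]
    intro k hk
    have hc : 2 * cos (-(γ / 2) + θ k) ^ 2 - 1 ≤ -η := by
      rw [← cos_two_mul, show 2 * (-(γ / 2) + θ k) = 2 * θ k - γ by ring]
      exact hηγ k hk
    set C := cos (-(γ / 2) + θ k) ^ 2
    have hS : sin (-(γ / 2) + θ k) ^ 2 = 1 - C := by linarith [sin_sq_add_cos_sq (-(γ / 2) + θ k)]
    have hC : C * (2 + 2 * η + η ^ 2) ≤ 1 := by nlinarith [sq_nonneg (cos (-(γ / 2) + θ k))]
    have hkey : (1 + η) ^ 4 * C + (1 - C) ≤ (1 + η) ^ 2 := by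
      nlinarith [mul_le_mul_of_nonneg_left hC (by positivity : 0 ≤ η * (2 + η))]
    calc (1 + η) ^ 2 * C + ((1 + η)⁻¹) ^ 2 * sin (-(γ / 2) + θ k) ^ 2
        = ((1 + η) ^ 4 * C + (1 - C)) / (1 + η) ^ 2 := by rw [hS]; field_simp
      _ ≤ 1 := (div_le_one (by positivity)).2 hkey
  · rintro ⟨ψ, hψ⟩
    have h := rot_col_sq (ψ + γ / 2)
    rw [← rot_mul_rot, ← hψ, mul_assoc, rot_mul_rot, neg_add_cancel, hDrot, cos_zero,
      sin_zero] at h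
    nlinarith

theorem iInter_mul_rot_mem_calN_eq_SO2_iff {ι : Type*} (s : Finset ι) (θ : ι → ℝ) :
    (⋂ k ∈ s, {F : M2 | F * rot (θ k) ∈ calN e1}) = SO2 ↔
      ¬∃ γ, ∀ k ∈ s, cos (2 * θ k - γ) < 0 := by
  constructor
  · rintro h ⟨γ, hγ⟩
    obtain ⟨F, hF, hFSO2⟩ := exists_mem_iInter_not_mem_SO2 hγ
    exact hFSO2 (h ▸ hF)
  · intro h
    refine (SO2_subset_iInter s θ).antisymm' fun F hF => ?_
    by_contra hFSO2
    exact h (exists_cos_neg_of_mem_iInter hF hFSO2)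

lemma cos_sub_nonneg_or_cos_sub_nonneg {x y γ : ℝ} (hx : x ≤ γ) (hy : γ ≤ y) (hxy : y - x ≤ π) :
    0 ≤ cos (x - γ) ∨ 0 ≤ cos (y - γ) := by
  rcases le_total (γ - x) (π / 2) with h | h
  · exact .inl (cos_nonneg_of_mem_Icc ⟨by linarith, by linarith⟩)
  · exact .inr (cos_nonneg_of_mem_Icc ⟨by linarith, by linarith⟩)

lemma cos_sub_nonneg_of_gaps_le_pi {x₀ x₁ x₂ : ℝ} (g₀₁ : x₁ - x₀ ≤ π) (g₁₂ : x₂ - x₁ ≤ π)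
    (g₂₀ : x₀ + 2 * π - x₂ ≤ π) (γ : ℝ) :
    0 ≤ cos (x₀ - γ) ∨ 0 ≤ cos (x₁ - γ) ∨ 0 ≤ cos (x₂ - γ) := by
  obtain ⟨γ', hγ', hcos⟩ : ∃ γ' ∈ Ico x₀ (x₀ + 2 * π), ∀ x, cos (x - γ) = cos (x - γ') := by
    refine ⟨toIcoMod two_pi_pos x₀ γ, toIcoMod_mem_Ico _ _ _, fun x => ?_⟩
    rw [← self_sub_toIcoDiv_zsmul, zsmul_eq_mul,
      ← cos_add_int_mul_two_pi (x - γ) (toIcoDiv two_pi_pos x₀ γ)]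
    ring_nf
  simp only [hcos]
  rcases le_total γ' x₁ with h₁ | h₁
  · rcases cos_sub_nonneg_or_cos_sub_nonneg hγ'.1 h₁ g₀₁ with h | h <;> simp [h]
  rcases le_total γ' x₂ with h₂ | h₂
  · rcases cos_sub_nonneg_or_cos_sub_nonneg h₁ h₂ g₁₂ with h | h <;> simp [h]
  · rcases cos_sub_nonneg_or_cos_sub_nonneg h₂ hγ'.2.le g₂₀ with h | h
    · simp [h]
    · rw [show x₀ + 2 * π - γ' = x₀ - γ' + 2 * π by ring, cos_add_two_pi] at h
      simp [h]

lemma cos_two_mul_sub_add_neg {a b x : ℝ} (ha : 0 ≤ a) (hab : a + π / 2 < b) (hb : b ≤ π)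
    (hx₀ : 0 ≤ x) (hxπ : x < π) (hx : x ≤ a ∨ b ≤ x) : cos (2 * x - (a + b)) < 0 := by
  rcases hx with hx | hx
  · rw [← cos_neg]
    exact cos_neg_of_pi_div_two_lt_of_lt (by linarith) (by linarith)
  · exact cos_neg_of_pi_div_two_lt_of_lt (by linarith) (by linarith)

section Angles

variable {N : ℕ} {θ : ℕ → ℝ}

lemma not_exists_cos_neg_of_gap (hθ1 : θ 1 = 0) (hθ : MonotoneOn θ (Icc 1 N))
    (hgap : ∃ n, 1 ≤ n ∧ n ≤ N - 1 ∧ θ n ≤ π / 2 ∧ π / 2 ≤ θ (n + 1) ∧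
      θ (n + 1) - θ n ≤ π / 2) :
    ¬∃ γ, ∀ k ∈ Finset.Icc 1 N, cos (2 * θ k - γ) < 0 := by
  rintro ⟨γ, hγ⟩
  obtain ⟨n, hn1, hnN, hθn, hθn1, hθgap⟩ := hgap
  have hn : n + 1 ≤ N := by omega
  have h0 : 0 ≤ θ n := hθ1 ▸ hθ ⟨le_rfl, by omega⟩ ⟨hn1, by omega⟩ hn1
  have hneg (k : ℕ) (hk1 : 1 ≤ k) (hkN : k ≤ N) := hγ k (Finset.mem_Icc.2 ⟨hk1, hkN⟩)
  rcases cos_sub_nonneg_of_gaps_le_pi (x₀ := 2 * θ 1) (x₁ := 2 * θ n) (x₂ := 2 * θ (n + 1))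
    (by linarith) (by linarith) (by linarith) γ with h | h | h
  · linarith [hneg 1 le_rfl (by omega)]
  · linarith [hneg n hn1 (by omega)]
  · linarith [hneg (n + 1) (by omega) hn]

lemma exists_cos_neg_of_not_gap (hθ1 : θ 1 = 0) (hθ : MonotoneOn θ (Icc 1 N))
    (hθN : θ N < π)
    (hgap : ¬∃ n, 1 ≤ n ∧ n ≤ N - 1 ∧ θ n ≤ π / 2 ∧ π / 2 ≤ θ (n + 1) ∧
      θ (n + 1) - θ n ≤ π / 2) :
    ∃ γ, ∀ k ∈ Finset.Icc 1 N, cos (2 * θ k - γ) < 0 := by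
  push Not at hgap
  rcases N.eq_zero_or_pos with rfl | hN
  · exact ⟨0, by simp⟩
  set P : ℕ → Prop := fun k => θ k ≤ π / 2
  set n := Nat.findGreatest P N
  have hθ1' : P 1 := by simp only [P, hθ1]; positivity
  have hn1 : 1 ≤ n := Nat.le_findGreatest hN hθ1'
  have hnN : n ≤ N := Nat.findGreatest_le N
  have hθn : θ n ≤ π / 2 := Nat.findGreatest_spec hN hθ1'
  have hθ0 : ∀ k ∈ Icc 1 N, 0 ≤ θ k := fun k hk => hθ1 ▸ hθ ⟨le_rfl, hN⟩ hk hk.1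
  have hθπ : ∀ k ∈ Icc 1 N, θ k < π := fun k hk =>
    (hθ hk ⟨hk.2.trans' hk.1, le_rfl⟩ hk.2).trans_lt hθN
  obtain ⟨b, hab, hbπ, hsplit⟩ : ∃ b, θ n + π / 2 < b ∧ b ≤ π ∧
      ∀ k ∈ Icc 1 N, θ k ≤ θ n ∨ b ≤ θ k := by
    rcases hnN.lt_or_eq with hlt | hnN
    · have hθn1 : π / 2 < θ (n + 1) :=
        lt_of_not_ge (Nat.findGreatest_is_greatest (P := P) (by omega) hlt)
      refine ⟨θ (n + 1), ?_, (hθπ _ ⟨by omega, hlt⟩).le, fun k hk => ?_⟩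
      · linarith [hgap n hn1 (by omega) hθn hθn1.le]
      · rcases le_or_gt k n with hkn | hkn
        · exact .inl (hθ hk ⟨hn1, hnN⟩ hkn)
        · exact .inr (hθ ⟨by omega, hlt⟩ hk hkn)
    · refine ⟨π, ?_, le_rfl, fun k hk => .inl (hnN ▸ hθ hk ⟨hk.2.trans' hk.1, le_rfl⟩ hk.2)⟩
      by_contra! hθn'
      have hθN' : θ N = π / 2 := by rw [← hnN]; linarith
      rcases (show N = 1 ∨ 2 ≤ N by omega) with rfl | hN2
      · linarith [pi_pos]
      have hθN1 : θ (N - 1) ≤ π / 2 := hθN' ▸ hθ ⟨by omega, by omega⟩ ⟨hN, le_rfl⟩ (by omega)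
      have h := hgap (N - 1) (by omega) le_rfl hθN1 (by rw [Nat.sub_add_cancel hN, hθN'])
      rw [Nat.sub_add_cancel hN, hθN'] at h
      linarith [hθ0 (N - 1) ⟨by omega, by omega⟩]
  exact ⟨θ n + b, fun k hk => cos_two_mul_sub_add_neg (hθ0 n ⟨hn1, hnN⟩) hab hbπ
    (hθ0 k (Finset.mem_Icc.1 hk)) (hθπ k (Finset.mem_Icc.1 hk)) (hsplit k (Finset.mem_Icc.1 hk))⟩

end Angles

end TaylorBound

open TaylorBound

theorem stmt1_general (N : ℕ) (θ : ℕ → ℝ)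
    (hθ1 : θ 1 = 0)
    (hmono : ∀ k, 1 ≤ k → k < N → θ k < θ (k + 1))
    (hθN : θ N < Real.pi) :
    (⋂ k ∈ Finset.Icc 1 N, {F : M2 | F * rot (θ k) ∈ calN e1}) = SO2 ↔
      ∃ n, 1 ≤ n ∧ n ≤ N - 1 ∧ θ n ≤ Real.pi / 2 ∧ Real.pi / 2 ≤ θ (n + 1) ∧
        θ (n + 1) - θ n ≤ Real.pi / 2 := by
  have hθ : MonotoneOn θ (Icc 1 N) :=
    (strictMonoOn_of_lt_add_one ordConnected_Icc fun k _ hk hk1 => hmono k hk.1 hk1.2).monotoneOn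
  rw [iInter_mul_rot_mem_calN_eq_SO2_iff]
  exact ⟨not_imp_comm.1 (exists_cos_neg_of_not_gap hθ1 hθ hθN), not_exists_cos_neg_of_gap hθ1 hθ⟩

/-- Trivial Taylor bound: ⋂_{k=1}^N 𝓝 R_{θ_k}ᵀ = SO(2) iff there exists n ∈ {1,…,N−1}
with θ_n ≤ π/2 ≤ θ_{n+1} and θ_{n+1} − θ_n ≤ π/2. -/
theorem stmt1 (N : ℕ) (hN : 2 ≤ N) (θ : ℕ → ℝ)
    (hθ1 : θ 1 = 0)
    (hmono : ∀ k, 1 ≤ k → k < N → θ k < θ (k + 1))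
    (hθN : θ N < Real.pi) :
    (⋂ k ∈ Finset.Icc 1 N, {F : M2 | F * rot (θ k) ∈ calN e1}) = SO2 ↔
      ∃ n, 1 ≤ n ∧ n ≤ N - 1 ∧ θ n ≤ Real.pi / 2 ∧ Real.pi / 2 ≤ θ (n + 1) ∧
        θ (n + 1) - θ n ≤ Real.pi / 2 :=
  stmt1_general N θ hθ1 hmono hθN
end
end

section
/- Let s, ν ∈ ℝ² be unit vectors with s·ν ≠ 0, and let F = R(β s⊗s + β⁻¹ s⊥⊗s⊥ + γ s⊗s⊥) where R ∈ SO(2), β > 0 and γ ∈ ℝ. Then the following are equivalent: (i) there exists a ∈ ℝ² with F + a⊗ν ∈ 𝓝_s; (ii) there exists a ∈ ℝ² with F + a⊗ν ∈ 𝓜_s; (iii) (((s·ν⊥)/(s·ν))·β + γ)² + β⁻² ≥ 1. -/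
/-!
Let `Q` be the rotation with columns `s` and `s⊥`. Conjugating by `R Q` on the left and `Q` on
the right sends `s` to `e₁`, `F` to the triangular matrix `T = [[β, γ], [0, β⁻¹]]`, rank-one
perturbations to rank-one perturbations, and preserves `𝓜` and `𝓝`. Writing `ν = Q (u, w)` with
`u = s·ν ≠ 0`, the condition `det (T + b⊗(u, w)) = 1` reads `b₀ u = b₁ K` with
`K = β (γ u - β w)`, and then `‖(T + b⊗(u, w)) e₁‖² = (β + q K)² + (q u)²` with `q = b₁`.
This quadratic in `q` is unbounded with minimum `β² u² / (K² + u²)`, so it takes a value `≤ 1`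
iff it takes the value `1` iff `β² u² ≤ K² + u²`, which is (iii) multiplied by `β² u²`.
-/

open Matrix Real Set MeasureTheory

noncomputable section

lemma enorm2_eq_sqrt_dotProduct (v : Fin 2 → ℝ) : enorm2 v = √(v ⬝ᵥ v) := by
  simp only [enorm2, dotProduct, Fin.sum_univ_two, sq]

lemma enorm2_le_one_iff (v : Fin 2 → ℝ) : enorm2 v ≤ 1 ↔ v ⬝ᵥ v ≤ 1 := by
  rw [enorm2_eq_sqrt_dotProduct, Real.sqrt_le_one]

lemma enorm2_eq_one_iff (v : Fin 2 → ℝ) : enorm2 v = 1 ↔ v ⬝ᵥ v = 1 := by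
  rw [enorm2_eq_sqrt_dotProduct, Real.sqrt_eq_one]

lemma dotProduct_perp_right (v w : Fin 2 → ℝ) : v ⬝ᵥ perp w = -(perp v ⬝ᵥ w) := by
  simp only [perp, dotProduct, Fin.sum_univ_two, Matrix.cons_val_zero, Matrix.cons_val_one]
  ring

lemma rot_mem_specialOrthogonalGroup (θ : ℝ) : rot θ ∈ specialOrthogonalGroup (Fin 2) ℝ := by
  simp [rot, Real.cos_sq_add_sin_sq]

lemma mulVec_dotProduct_mulVec_of_mem_orthogonalGroup {n R : Type*} [Fintype n] [DecidableEq n]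
    [CommRing R] {P : Matrix n n R} (hP : P ∈ orthogonalGroup n R) (v w : n → R) :
    (P *ᵥ v) ⬝ᵥ (P *ᵥ w) = v ⬝ᵥ w := by
  rw [dotProduct_mulVec, ← mulVec_transpose, mulVec_mulVec, (mem_orthogonalGroup_iff' _ _).mp hP,
    one_mulVec]

lemma mul_vecMulVec_mul_transpose {l m n o : Type*} [Fintype m] [Fintype n] {R : Type*}
    [CommRing R] (P : Matrix l m R) (Q : Matrix o n R) (x : m → R) (y : n → R) :
    P * vecMulVec x y * Qᵀ = vecMulVec (P *ᵥ x) (Q *ᵥ y) := by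
  rw [mul_vecMulVec, vecMulVec_mul, vecMul_transpose]

section Conjugation

variable {P Q : M2} (hP : P ∈ specialOrthogonalGroup (Fin 2) ℝ)
  (hQ : Q ∈ specialOrthogonalGroup (Fin 2) ℝ)
include hP hQ

lemma det_mul_mul_transpose (A : M2) : (P * A * Qᵀ).det = A.det := by
  rw [det_mul, det_mul, det_transpose, (mem_specialOrthogonalGroup_iff.mp hP).2,
    (mem_specialOrthogonalGroup_iff.mp hQ).2, one_mul, mul_one]

lemma mul_mul_transpose_mulVec_dotProduct_self (A : M2) (s : Fin 2 → ℝ) :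
    (P * A * Qᵀ) *ᵥ (Q *ᵥ s) ⬝ᵥ (P * A * Qᵀ) *ᵥ (Q *ᵥ s) = A *ᵥ s ⬝ᵥ A *ᵥ s := by
  rw [mulVec_mulVec, Matrix.mul_assoc, (mem_orthogonalGroup_iff' _ _).mp hQ.1, Matrix.mul_one,
    ← mulVec_mulVec, mulVec_dotProduct_mulVec_of_mem_orthogonalGroup hP.1]

lemma mul_mul_transpose_mem_calN_iff (A : M2) (s : Fin 2 → ℝ) :
    P * A * Qᵀ ∈ calN (Q *ᵥ s) ↔ A ∈ calN s := by
  simp only [calN, Set.mem_ofPred_eq, enorm2_le_one_iff, det_mul_mul_transpose hP hQ,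
    mul_mul_transpose_mulVec_dotProduct_self hP hQ]

lemma mul_mul_transpose_mem_calM_iff (A : M2) (s : Fin 2 → ℝ) :
    P * A * Qᵀ ∈ calM (Q *ᵥ s) ↔ A ∈ calM s := by
  simp only [calM, Set.mem_ofPred_eq, enorm2_eq_one_iff, det_mul_mul_transpose hP hQ,
    mul_mul_transpose_mulVec_dotProduct_self hP hQ]

end Conjugation

lemma exists_add_vecMulVec_mem_iff_of_conj {P Q : M2} (hP : P ∈ orthogonalGroup (Fin 2) ℝ)
    (A : M2) (n : Fin 2 → ℝ) {X Y : Set M2} (hXY : ∀ B, P * B * Qᵀ ∈ X ↔ B ∈ Y) :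
    (∃ a, P * A * Qᵀ + vecMulVec a (Q *ᵥ n) ∈ X) ↔ ∃ b, A + vecMulVec b n ∈ Y := by
  have hconj : ∀ b, P * (A + vecMulVec b n) * Qᵀ = P * A * Qᵀ + vecMulVec (P *ᵥ b) (Q *ᵥ n) := by
    intro b
    rw [Matrix.mul_add, Matrix.add_mul, mul_vecMulVec_mul_transpose]
  constructor
  · rintro ⟨a, ha⟩
    refine ⟨Pᵀ *ᵥ a, (hXY _).mp ?_⟩
    rwa [hconj, mulVec_mulVec, (mem_orthogonalGroup_iff _ _).mp hP, one_mulVec]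
  · rintro ⟨b, hb⟩
    exact ⟨P *ᵥ b, hconj b ▸ (hXY _).mpr hb⟩

def frame (s : Fin 2 → ℝ) : M2 := !![s 0, -s 1; s 1, s 0]

lemma frame_mem_specialOrthogonalGroup {s : Fin 2 → ℝ} (hs : s ⬝ᵥ s = 1) :
    frame s ∈ specialOrthogonalGroup (Fin 2) ℝ := by
  simpa [frame, dotProduct, Fin.sum_univ_two, sq] using hs

lemma frame_mulVec_e1 (s : Fin 2 → ℝ) : frame s *ᵥ e1 = s := by
  ext i; fin_cases i <;> simp [frame, e1]

lemma frame_mulVec_e2 (s : Fin 2 → ℝ) : frame s *ᵥ e2 = perp s := by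
  ext i; fin_cases i <;> simp [frame, e2, perp]

lemma transpose_frame_mulVec (s v : Fin 2 → ℝ) :
    (frame s)ᵀ *ᵥ v = ![s ⬝ᵥ v, perp s ⬝ᵥ v] := by
  ext i; fin_cases i <;> simp [frame, perp, dotProduct, Fin.sum_univ_two]

def shear (β γ : ℝ) : M2 := !![β, γ; 0, β⁻¹]

lemma frame_mul_shear_mul_transpose (s : Fin 2 → ℝ) (β γ : ℝ) :
    frame s * shear β γ * (frame s)ᵀ = β • vecMulVec s s + β⁻¹ • vecMulVec (perp s) (perp s) +
      γ • vecMulVec s (perp s) := by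
  have hshear : shear β γ =
      β • vecMulVec e1 e1 + β⁻¹ • vecMulVec e2 e2 + γ • vecMulVec e1 e2 := by
    ext i j; fin_cases i <;> fin_cases j <;> simp [shear, e1, e2]
  simp only [hshear, Matrix.mul_add, Matrix.add_mul, Matrix.mul_smul, Matrix.smul_mul,
    mul_vecMulVec_mul_transpose, frame_mulVec_e1, frame_mulVec_e2]

lemma det_shear_add_vecMulVec {β : ℝ} (hβ : β ≠ 0) (γ : ℝ) (b : Fin 2 → ℝ) (u w : ℝ) :
    (shear β γ + vecMulVec b ![u, w]).det =
      1 + β⁻¹ * (b 0 * u - b 1 * (β * (γ * u - β * w))) := by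
  simp only [det_fin_two, Matrix.add_apply, vecMulVec_apply, shear, of_apply, cons_val',
    cons_val_zero, cons_val_one, empty_val', cons_val_fin_one]
  field_simp
  ring

lemma shear_add_vecMulVec_mulVec_e1 (β γ : ℝ) (b : Fin 2 → ℝ) (u w : ℝ) :
    (shear β γ + vecMulVec b ![u, w]) *ᵥ e1 = ![β + b 0 * u, b 1 * u] := by
  ext i; fin_cases i <;> simp [shear, e1, mulVec, dotProduct, Fin.sum_univ_two]

lemma sq_mul_sq_le_of_sq_add_sq_le_one {β K u q : ℝ} (h : (β + q * K) ^ 2 + (q * u) ^ 2 ≤ 1) :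
    β ^ 2 * u ^ 2 ≤ K ^ 2 + u ^ 2 := by
  have hcompl : (K ^ 2 + u ^ 2) * ((β + q * K) ^ 2 + (q * u) ^ 2) =
      ((K ^ 2 + u ^ 2) * q + β * K) ^ 2 + β ^ 2 * u ^ 2 := by ring
  nlinarith [sq_nonneg ((K ^ 2 + u ^ 2) * q + β * K),
    mul_le_mul_of_nonneg_left h (by positivity : 0 ≤ K ^ 2 + u ^ 2)]

lemma exists_sq_add_sq_eq_one {β K u : ℝ} (hu : u ≠ 0) (h : β ^ 2 * u ^ 2 ≤ K ^ 2 + u ^ 2) :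
    ∃ q, (β + q * K) ^ 2 + (q * u) ^ 2 = 1 := by
  have hdisc : discrim (K ^ 2 + u ^ 2) (2 * β * K) (β ^ 2 - 1) =
      (2 * √(K ^ 2 + u ^ 2 - β ^ 2 * u ^ 2)) * (2 * √(K ^ 2 + u ^ 2 - β ^ 2 * u ^ 2)) := by
    rw [mul_mul_mul_comm, Real.mul_self_sqrt (by linarith), discrim]
    ring
  obtain ⟨q, hq⟩ := exists_quadratic_eq_zero (by positivity) ⟨_, hdisc⟩
  exact ⟨q, by linear_combination hq⟩

lemma one_le_sq_add_inv_sq_iff {β u : ℝ} (hβ : β ≠ 0) (hu : u ≠ 0) (γ w : ℝ) :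
    (-w / u * β + γ) ^ 2 + β⁻¹ ^ 2 ≥ 1 ↔ β ^ 2 * u ^ 2 ≤ (β * (γ * u - β * w)) ^ 2 + u ^ 2 := by
  have hscale : ((-w / u * β + γ) ^ 2 + β⁻¹ ^ 2) * (β ^ 2 * u ^ 2) =
      (β * (γ * u - β * w)) ^ 2 + u ^ 2 := by
    field_simp
    ring
  rw [ge_iff_le, ← mul_le_mul_iff_left₀ (by positivity : 0 < β ^ 2 * u ^ 2), one_mul, hscale]

lemma exists_shear_add_vecMulVec_iff {β : ℝ} (hβ : β ≠ 0) (γ : ℝ) {u : ℝ} (hu : u ≠ 0) (w : ℝ)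
    (r : ℝ → Prop) :
    (∃ b, (shear β γ + vecMulVec b ![u, w]).det = 1 ∧
        r ((shear β γ + vecMulVec b ![u, w]) *ᵥ e1 ⬝ᵥ (shear β γ + vecMulVec b ![u, w]) *ᵥ e1)) ↔
      ∃ q, r ((β + q * (β * (γ * u - β * w))) ^ 2 + (q * u) ^ 2) := by
  simp only [det_shear_add_vecMulVec hβ, shear_add_vecMulVec_mulVec_e1, dotProduct,
    Fin.sum_univ_two, cons_val_zero, cons_val_one, add_eq_left, mul_eq_zero, inv_eq_zero, hβ,
    false_or, sub_eq_zero, ← sq]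
  constructor
  · rintro ⟨b, hb, hr⟩
    exact ⟨b 1, by rwa [← hb]⟩
  · rintro ⟨q, hr⟩
    refine ⟨![q * (β * (γ * u - β * w)) / u, q], ?_, ?_⟩ <;> simp only [cons_val_zero, cons_val_one]
    · field_simp
    · rwa [div_mul_cancel₀ _ hu]

theorem shear_add_vecMulVec_compatible_iff {β : ℝ} (hβ : β ≠ 0) (γ : ℝ) {u : ℝ} (hu : u ≠ 0)
    (w : ℝ) :
    ((∃ b, shear β γ + vecMulVec b ![u, w] ∈ calN e1) ↔
      (∃ b, shear β γ + vecMulVec b ![u, w] ∈ calM e1)) ∧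
    ((∃ b, shear β γ + vecMulVec b ![u, w] ∈ calN e1) ↔
      (-w / u * β + γ) ^ 2 + β⁻¹ ^ 2 ≥ 1) := by
  simp only [calN, calM, Set.mem_ofPred_eq, enorm2_le_one_iff, enorm2_eq_one_iff,
    exists_shear_add_vecMulVec_iff hβ γ hu w (· ≤ 1),
    exists_shear_add_vecMulVec_iff hβ γ hu w (· = 1), one_le_sq_add_inv_sq_iff hβ hu]
  have hN : (∃ q, (β + q * (β * (γ * u - β * w))) ^ 2 + (q * u) ^ 2 ≤ 1) ↔
      β ^ 2 * u ^ 2 ≤ (β * (γ * u - β * w)) ^ 2 + u ^ 2 :=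
    ⟨fun ⟨_, hq⟩ ↦ sq_mul_sq_le_of_sq_add_sq_le_one hq,
      fun h ↦ (exists_sq_add_sq_eq_one hu h).imp fun _ hq ↦ hq.le⟩
  refine ⟨hN.trans ⟨fun h ↦ exists_sq_add_sq_eq_one hu h, ?_⟩, hN⟩
  exact fun ⟨_, hq⟩ ↦ sq_mul_sq_le_of_sq_add_sq_le_one hq.le

theorem stmt2_general (s ν : Fin 2 → ℝ) (hs : enorm2 s = 1)
    (hsν : s ⬝ᵥ ν ≠ 0) (R : M2) (hR : R ∈ SO2) (β γ : ℝ) (hβ : 0 < β)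
    (F : M2)
    (hF : F = R * (β • vecMulVec s s + β⁻¹ • vecMulVec (perp s) (perp s) +
      γ • vecMulVec s (perp s))) :
    ((∃ a : Fin 2 → ℝ, F + vecMulVec a ν ∈ calN s) ↔
      (∃ a : Fin 2 → ℝ, F + vecMulVec a ν ∈ calM s)) ∧
    ((∃ a : Fin 2 → ℝ, F + vecMulVec a ν ∈ calN s) ↔
      ((s ⬝ᵥ perp ν) / (s ⬝ᵥ ν) * β + γ) ^ 2 + (β⁻¹) ^ 2 ≥ 1) := by
  obtain ⟨θ, rfl⟩ := hR
  have hQ := frame_mem_specialOrthogonalGroup ((enorm2_eq_one_iff s).mp hs)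
  have hP := mul_mem (rot_mem_specialOrthogonalGroup θ) hQ
  have hF' : F = rot θ * frame s * shear β γ * (frame s)ᵀ := by
    rw [hF, ← frame_mul_shear_mul_transpose]
    simp only [Matrix.mul_assoc]
  have hν : frame s *ᵥ ![s ⬝ᵥ ν, perp s ⬝ᵥ ν] = ν := by
    rw [← transpose_frame_mulVec, mulVec_mulVec, (mem_orthogonalGroup_iff _ _).mp hQ.1,
      one_mulVec]
  have hN := exists_add_vecMulVec_mem_iff_of_conj hP.1 (shear β γ) ![s ⬝ᵥ ν, perp s ⬝ᵥ ν]
    (mul_mul_transpose_mem_calN_iff hP hQ · e1)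
  have hM := exists_add_vecMulVec_mem_iff_of_conj hP.1 (shear β γ) ![s ⬝ᵥ ν, perp s ⬝ᵥ ν]
    (mul_mul_transpose_mem_calM_iff hP hQ · e1)
  rw [← hF', hν, frame_mulVec_e1] at hN hM
  rw [hN, hM, dotProduct_perp_right]
  exact shear_add_vecMulVec_compatible_iff hβ.ne' γ hsν _

/-- Lemma on rank-one compatibility: equivalence of ν-compatibility with 𝓝_s,
ν-compatibility with 𝓜_s, and the algebraic inequality. -/
theorem stmt2 (s ν : Fin 2 → ℝ) (hs : enorm2 s = 1) (hν : enorm2 ν = 1)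
    (hsν : s ⬝ᵥ ν ≠ 0) (R : M2) (hR : R ∈ SO2) (β γ : ℝ) (hβ : 0 < β)
    (F : M2)
    (hF : F = R * (β • vecMulVec s s + β⁻¹ • vecMulVec (perp s) (perp s) +
      γ • vecMulVec s (perp s))) :
    ((∃ a : Fin 2 → ℝ, F + vecMulVec a ν ∈ calN s) ↔
      (∃ a : Fin 2 → ℝ, F + vecMulVec a ν ∈ calM s)) ∧
    ((∃ a : Fin 2 → ℝ, F + vecMulVec a ν ∈ calN s) ↔
      ((s ⬝ᵥ perp ν) / (s ⬝ᵥ ν) * β + γ) ^ 2 + (β⁻¹) ^ 2 ≥ 1) :=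
  stmt2_general s ν hs hsν R hR β γ hβ F hF
end
end

section
/- Let s ∈ ℝ² be a unit vector and F ∈ ℝ^{2×2}. Then: (a) det F = 1 if and only if there exist R ∈ SO(2), β > 0 and γ ∈ ℝ with F = R(β s⊗s + β⁻¹ s⊥⊗s⊥ + γ s⊗s⊥); (b) F ∈ 𝓝_s if and only if such a representation exists with 0 < β ≤ 1; (c) F ∈ 𝓜_s if and only if such a representation exists with β = 1. -/
/-!
Everything is computed in the orthonormal basis `s, s⊥`, using that the signed area
`perp v ⬝ᵥ w` is scaled by `det`. If `det F = 1` then `F s ≠ 0`; put `β = ‖F s‖` and choose a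
rotation `R` with `R s = F s / β`. Then `H = R⁻¹ F` has `H s = β s` and `det H = 1`, which forces
`⟨s⊥, H s⊥⟩ = β⁻¹`, so `H = β s⊗s + β⁻¹ s⊥⊗s⊥ + γ s⊗s⊥` with `γ = ⟨s, H s⊥⟩`. Conversely every
`R H` of this form has determinant `1` and `‖R H s‖ = β`, so the conditions `‖F s‖ ≤ 1` and
`‖F s‖ = 1` become `β ≤ 1` and `β = 1`.
-/

open Matrix Real Set MeasureTheory

noncomputable section

def stretchShear (s : Fin 2 → ℝ) (β γ : ℝ) : M2 :=
  β • vecMulVec s s + β⁻¹ • vecMulVec (perp s) (perp s) + γ • vecMulVec s (perp s)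

lemma dotProduct_self_nonneg (v : Fin 2 → ℝ) : 0 ≤ v ⬝ᵥ v := by
  simpa only [dotProduct, Fin.sum_univ_two] using
    add_nonneg (mul_self_nonneg (v 0)) (mul_self_nonneg (v 1))

lemma sq_enorm2 (v : Fin 2 → ℝ) : enorm2 v ^ 2 = v ⬝ᵥ v := by
  rw [enorm2_eq_sqrt_dotProduct, sq_sqrt (dotProduct_self_nonneg v)]

lemma perp_smul (c : ℝ) (v : Fin 2 → ℝ) : perp (c • v) = c • perp v := by
  ext i; fin_cases i <;> simp [perp]

lemma dotProduct_perp_self (v : Fin 2 → ℝ) : v ⬝ᵥ perp v = 0 := by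
  simp [perp, dotProduct, Fin.sum_univ_two]; ring

lemma perp_dotProduct_self (v : Fin 2 → ℝ) : perp v ⬝ᵥ v = 0 := by
  rw [dotProduct_comm, dotProduct_perp_self]

lemma perp_dotProduct_perp (v w : Fin 2 → ℝ) : perp v ⬝ᵥ perp w = v ⬝ᵥ w := by
  simp [perp, dotProduct, Fin.sum_univ_two]; ring

lemma perp_mulVec_dotProduct_mulVec (H : M2) (v w : Fin 2 → ℝ) :
    perp (H *ᵥ v) ⬝ᵥ H *ᵥ w = H.det * (perp v ⬝ᵥ w) := by
  simp [perp, dotProduct, mulVec, Fin.sum_univ_two, det_fin_two]; ring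

lemma eq_dotProduct_smul_add_perp_dotProduct_smul {s : Fin 2 → ℝ} (hs : s ⬝ᵥ s = 1)
    (v : Fin 2 → ℝ) : v = (s ⬝ᵥ v) • s + (perp s ⬝ᵥ v) • perp s := by
  simp only [dotProduct, Fin.sum_univ_two, Fin.isValue] at hs
  ext i; fin_cases i <;> simp [perp, dotProduct, Fin.sum_univ_two]
    <;> linear_combination (-v _) * hs

lemma sq_dotProduct_add_sq_perp_dotProduct {s : Fin 2 → ℝ} (hs : s ⬝ᵥ s = 1)
    (v : Fin 2 → ℝ) : (s ⬝ᵥ v) ^ 2 + (perp s ⬝ᵥ v) ^ 2 = v ⬝ᵥ v := by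
  simp only [perp, dotProduct, Fin.sum_univ_two, Fin.isValue] at hs ⊢
  simp only [Fin.isValue, cons_val_zero, cons_val_one]
  linear_combination (v 0 ^ 2 + v 1 ^ 2) * hs

lemma ext_of_mulVec_of_mulVec_perp {s : Fin 2 → ℝ} (hs : s ⬝ᵥ s = 1) {A B : M2}
    (h : A *ᵥ s = B *ᵥ s) (h_perp : A *ᵥ perp s = B *ᵥ perp s) : A = B := by
  refine ext_iff_mulVec.2 fun v => ?_
  rw [eq_dotProduct_smul_add_perp_dotProduct_smul hs v]
  simp only [mulVec_add, mulVec_smul, h, h_perp]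

lemma rot_mulVec (θ : ℝ) (v : Fin 2 → ℝ) : rot θ *ᵥ v = cos θ • v + sin θ • perp v := by
  ext i; fin_cases i <;> simp [rot, perp, mulVec, dotProduct, Fin.sum_univ_two, mul_comm, add_comm]

lemma rot_mul_rot_neg (θ : ℝ) : rot θ * rot (-θ) = 1 := by
  ext i j; fin_cases i <;> fin_cases j <;> simp [rot, mul_apply, Fin.sum_univ_two] <;>
    nlinarith [sin_sq_add_cos_sq θ]

lemma rot_neg_mul_rot (θ : ℝ) : rot (-θ) * rot θ = 1 := by
  simpa using rot_mul_rot_neg (-θ)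

lemma det_rot (θ : ℝ) : (rot θ).det = 1 := by
  simp [rot, det_fin_two_of, ← sq, cos_sq_add_sin_sq]

lemma dotProduct_rot_mulVec_self (θ : ℝ) (v : Fin 2 → ℝ) :
    rot θ *ᵥ v ⬝ᵥ rot θ *ᵥ v = v ⬝ᵥ v := by
  simp only [rot_mulVec, add_dotProduct, dotProduct_add, smul_dotProduct, dotProduct_smul,
    perp_dotProduct_perp, dotProduct_perp_self, perp_dotProduct_self, smul_eq_mul]
  linear_combination (v ⬝ᵥ v) * sin_sq_add_cos_sq θ

lemma exists_rot_mulVec_eq {s u : Fin 2 → ℝ} (hs : s ⬝ᵥ s = 1) (hu : u ⬝ᵥ u = 1) :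
    ∃ θ, rot θ *ᵥ s = u := by
  set z : ℂ := ⟨s ⬝ᵥ u, perp s ⬝ᵥ u⟩
  have hz : ‖z‖ = 1 := by
    rw [Complex.norm_def, Complex.normSq_mk, ← sq, ← sq,
      sq_dotProduct_add_sq_perp_dotProduct hs, hu, sqrt_one]
  refine ⟨z.arg, ?_⟩
  rw [rot_mulVec, Complex.cos_arg (norm_ne_zero_iff.1 (hz ▸ one_ne_zero)), Complex.sin_arg, hz,
    div_one, div_one]
  exact (eq_dotProduct_smul_add_perp_dotProduct_smul hs u).symm

lemma stretchShear_mulVec_self {s : Fin 2 → ℝ} (hs : s ⬝ᵥ s = 1) (β γ : ℝ) :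
    stretchShear s β γ *ᵥ s = β • s := by
  simp only [stretchShear, add_mulVec, smul_mulVec, vecMulVec_mulVec, op_smul_eq_smul, hs,
    perp_dotProduct_self, zero_smul, smul_zero, one_smul, add_zero]

lemma stretchShear_mulVec_perp {s : Fin 2 → ℝ} (hs : s ⬝ᵥ s = 1) (β γ : ℝ) :
    stretchShear s β γ *ᵥ perp s = γ • s + β⁻¹ • perp s := by
  simp only [stretchShear, add_mulVec, smul_mulVec, vecMulVec_mulVec, op_smul_eq_smul, hs,
    dotProduct_perp_self, perp_dotProduct_perp, zero_smul, smul_zero, one_smul, zero_add]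
  exact add_comm _ _

lemma det_stretchShear {s : Fin 2 → ℝ} (hs : s ⬝ᵥ s = 1) {β : ℝ} (hβ : β ≠ 0)
    (γ : ℝ) : (stretchShear s β γ).det = 1 := by
  have h := perp_mulVec_dotProduct_mulVec (stretchShear s β γ) s (perp s)
  rw [stretchShear_mulVec_self hs, stretchShear_mulVec_perp hs, perp_dotProduct_perp, hs,
    perp_smul] at h
  simp only [smul_dotProduct, dotProduct_add, dotProduct_smul, perp_dotProduct_self,
    perp_dotProduct_perp, hs, smul_eq_mul] at h
  field_simp at h
  linarith

lemma eq_stretchShear_of_mulVec_self {s : Fin 2 → ℝ} (hs : s ⬝ᵥ s = 1) {H : M2} {β : ℝ}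
    (hH : H.det = 1) (hHs : H *ᵥ s = β • s) :
    H = stretchShear s β (s ⬝ᵥ H *ᵥ perp s) := by
  have h_area : β * (perp s ⬝ᵥ H *ᵥ perp s) = 1 := by
    simpa only [hHs, perp_smul, smul_dotProduct, smul_eq_mul, hH, perp_dotProduct_perp, hs,
      one_mul] using perp_mulVec_dotProduct_mulVec H s (perp s)
  refine ext_of_mulVec_of_mulVec_perp hs ?_ ?_
  · rw [hHs, stretchShear_mulVec_self hs]
  · rw [stretchShear_mulVec_perp hs, ← eq_inv_of_mul_eq_one_right h_area,
      ← eq_dotProduct_smul_add_perp_dotProduct_smul hs]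

lemma enorm2_rot_mul_stretchShear_mulVec_self {s : Fin 2 → ℝ} (hs : s ⬝ᵥ s = 1) (θ : ℝ)
    {β : ℝ} (hβ : 0 ≤ β) (γ : ℝ) :
    enorm2 ((rot θ * stretchShear s β γ) *ᵥ s) = β := by
  rw [← mulVec_mulVec, stretchShear_mulVec_self hs, enorm2_eq_sqrt_dotProduct,
    dotProduct_rot_mulVec_self, smul_dotProduct, dotProduct_smul, hs, smul_eq_mul, smul_eq_mul,
    mul_one, sqrt_mul_self hβ]

lemma enorm2_mulVec_pos_of_det_ne_zero {s : Fin 2 → ℝ} (hs : s ⬝ᵥ s = 1) {F : M2}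
    (hF : F.det ≠ 0) : 0 < enorm2 (F *ᵥ s) := by
  have hFs : F *ᵥ s ≠ 0 := fun h => by
    simp [mulVec_injective_of_det_ne_zero hF (h.trans (mulVec_zero F).symm)] at hs
  rw [enorm2_eq_sqrt_dotProduct]
  exact sqrt_pos.2 ((dotProduct_self_nonneg _).lt_of_ne' (mt dotProduct_self_eq_zero.1 hFs))

lemma exists_eq_rot_mul_stretchShear {s : Fin 2 → ℝ} (hs : s ⬝ᵥ s = 1) {F : M2}
    (hF : F.det = 1) :
    ∃ θ γ, F = rot θ * stretchShear s (enorm2 (F *ᵥ s)) γ := by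
  set β := enorm2 (F *ᵥ s) with hβ_def
  have hβ : 0 < β := enorm2_mulVec_pos_of_det_ne_zero hs (hF ▸ one_ne_zero)
  have hu : (β⁻¹ • F *ᵥ s) ⬝ᵥ (β⁻¹ • F *ᵥ s) = 1 := by
    rw [smul_dotProduct, dotProduct_smul, ← sq_enorm2, ← hβ_def, smul_eq_mul, smul_eq_mul]
    field_simp
  obtain ⟨θ, hθ⟩ := exists_rot_mulVec_eq hs hu
  have hHs : (rot (-θ) * F) *ᵥ s = β • s := by
    have hFs : F *ᵥ s = β • rot θ *ᵥ s := by rw [hθ, smul_inv_smul₀ hβ.ne']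
    rw [← mulVec_mulVec, hFs, mulVec_smul, mulVec_mulVec, rot_neg_mul_rot, one_mulVec]
  refine ⟨θ, s ⬝ᵥ (rot (-θ) * F) *ᵥ perp s, ?_⟩
  rw [← eq_stretchShear_of_mulVec_self hs (by rw [det_mul, det_rot, hF, one_mul]) hHs,
    ← Matrix.mul_assoc, rot_mul_rot_neg, Matrix.one_mul]

lemma det_eq_one_and_iff_exists_rot_mul_stretchShear {s : Fin 2 → ℝ} (hs : s ⬝ᵥ s = 1)
    (P : ℝ → Prop) (F : M2) :
    F.det = 1 ∧ P (enorm2 (F *ᵥ s)) ↔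
      ∃ R ∈ SO2, ∃ β γ : ℝ, 0 < β ∧ P β ∧ F = R * stretchShear s β γ := by
  constructor
  · rintro ⟨hF, hP⟩
    obtain ⟨θ, γ, hF_eq⟩ := exists_eq_rot_mul_stretchShear hs hF
    exact ⟨rot θ, ⟨θ, rfl⟩, _, γ, enorm2_mulVec_pos_of_det_ne_zero hs (hF ▸ one_ne_zero), hP, hF_eq⟩
  · rintro ⟨_, ⟨θ, rfl⟩, β, γ, hβ, hP, rfl⟩
    refine ⟨by rw [det_mul, det_rot, det_stretchShear hs hβ.ne', one_mul], ?_⟩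
    rwa [enorm2_rot_mul_stretchShear_mulVec_self hs θ hβ.le]

/-- Representation of matrices: (a) det F = 1 iff F = R(β s⊗s + β⁻¹ s⊥⊗s⊥ + γ s⊗s⊥)
with R ∈ SO(2), β > 0; (b) F ∈ 𝓝_s iff moreover 0 < β ≤ 1; (c) F ∈ 𝓜_s iff β = 1. -/
theorem stmt3 (s : Fin 2 → ℝ) (hs : enorm2 s = 1) (F : M2) :
    (F.det = 1 ↔ ∃ R ∈ SO2, ∃ β γ : ℝ, 0 < β ∧
      F = R * (β • vecMulVec s s + β⁻¹ • vecMulVec (perp s) (perp s) +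
        γ • vecMulVec s (perp s))) ∧
    (F ∈ calN s ↔ ∃ R ∈ SO2, ∃ β γ : ℝ, 0 < β ∧ β ≤ 1 ∧
      F = R * (β • vecMulVec s s + β⁻¹ • vecMulVec (perp s) (perp s) +
        γ • vecMulVec s (perp s))) ∧
    (F ∈ calM s ↔ ∃ R ∈ SO2, ∃ γ : ℝ,
      F = R * ((1 : ℝ) • vecMulVec s s + (1 : ℝ)⁻¹ • vecMulVec (perp s) (perp s) +
        γ • vecMulVec s (perp s))) := by
  rw [enorm2_eq_sqrt_dotProduct, sqrt_eq_one] at hs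
  have key := fun P => det_eq_one_and_iff_exists_rot_mul_stretchShear hs P F
  refine ⟨by simpa [stretchShear] using key fun _ => True, key (· ≤ 1), ?_⟩
  simpa [stretchShear, calM] using key (· = 1)
end
end

section
/- Let s ∈ ℝ² be a unit vector, let F ∈ ℝ^{2×2} with det F = 1, and let 𝓓 be a dense subset of the unit circle {ν ∈ ℝ² : ‖ν‖ = 1}. Then there exists a ∈ ℝ² with F + a⊗s⊥ ∈ 𝓝_s if and only if for every ν ∈ 𝓓 there exists a ∈ ℝ² with F + a⊗ν ∈ 𝓝_s. -/
open Matrix Real Set MeasureTheory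

noncomputable section

/-!
For `G = F + a ⊗ ν` we have `G ν⊥ = F ν⊥`, so when `det G = 1` the area spanned by `G s` and
`F ν⊥` is `s · ν`; together with `‖G s‖ ≤ 1` this gives `|s · ν| ≤ ‖F ν⊥‖`. This inequality is
closed in `ν` and homogeneous, so from the dense set it spreads to every `ν`. Testing it with
`ν = Fᵀ F s`, for which `F ν⊥ = (F s)⊥`, yields `‖F s‖² ≤ ‖F s‖`, i.e. `F ∈ 𝓝_s`; conversely
`a ⊗ s⊥` does not change `F s`, so the left-hand side also just says `F ∈ 𝓝_s`.
-/

namespace RankOneCompatibility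

lemma enorm2_eq_norm (v : Fin 2 → ℝ) : enorm2 v = ‖WithLp.toLp 2 v‖ := by
  simp [enorm2, EuclideanSpace.norm_eq, Fin.sum_univ_two]

lemma enorm2_nonneg (v : Fin 2 → ℝ) : 0 ≤ enorm2 v := Real.sqrt_nonneg _

lemma enorm2_smul (c : ℝ) (v : Fin 2 → ℝ) : enorm2 (c • v) = |c| * enorm2 v := by
  simp only [enorm2_eq_norm, WithLp.toLp_smul, norm_smul, Real.norm_eq_abs]

lemma continuous_enorm2 : Continuous enorm2 := by
  simp only [funext enorm2_eq_norm]
  fun_prop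

lemma dotProduct_self_eq_enorm2_sq (v : Fin 2 → ℝ) : v ⬝ᵥ v = enorm2 v ^ 2 := by
  rw [enorm2, Real.sq_sqrt (by positivity), dotProduct, Fin.sum_univ_two, sq, sq]

lemma abs_dotProduct_le (u v : Fin 2 → ℝ) : |u ⬝ᵥ v| ≤ enorm2 u * enorm2 v := by
  simpa [enorm2_eq_norm, EuclideanSpace.inner_toLp_toLp, dotProduct_comm]
    using abs_real_inner_le_norm (WithLp.toLp 2 u) (WithLp.toLp 2 v)

lemma enorm2_perp (v : Fin 2 → ℝ) : enorm2 (perp v) = enorm2 v := by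
  simp [enorm2, perp, add_comm]

lemma perp_smul (c : ℝ) (v : Fin 2 → ℝ) : perp (c • v) = c • perp v := by
  ext i; fin_cases i <;> simp [perp]

@[fun_prop]
lemma continuous_perp : Continuous perp := by
  unfold perp; fun_prop

lemma dotProduct_perp_self (v : Fin 2 → ℝ) : v ⬝ᵥ perp v = 0 := by
  simp only [dotProduct, perp, Fin.sum_univ_two, cons_val_zero, cons_val_one, cons_val_fin_one]
  ring

lemma perp_dotProduct_perp (u v : Fin 2 → ℝ) : perp u ⬝ᵥ perp v = u ⬝ᵥ v := by
  simp only [dotProduct, perp, Fin.sum_univ_two, cons_val_zero, cons_val_one, cons_val_fin_one]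
  ring

lemma perp_mulVec_dotProduct_mulVec (G : M2) (u v : Fin 2 → ℝ) :
    perp (G *ᵥ u) ⬝ᵥ (G *ᵥ v) = G.det * (perp u ⬝ᵥ v) := by
  simp only [mulVec, det_fin_two, dotProduct, perp, Fin.sum_univ_two, cons_val_zero, cons_val_one,
    cons_val_fin_one]
  ring

lemma mulVec_perp_vecMul (F : M2) (v : Fin 2 → ℝ) : F *ᵥ perp (v ᵥ* F) = F.det • perp v := by
  ext i
  fin_cases i <;>
  · simp only [mulVec, vecMul, det_fin_two, dotProduct, perp, Fin.sum_univ_two, Pi.smul_apply,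
      smul_eq_mul, Fin.zero_eta, Fin.mk_one, cons_val_zero, cons_val_one, cons_val_fin_one]
    ring

lemma add_vecMulVec_mulVec_of_dotProduct_eq_zero (F : M2) (a : Fin 2 → ℝ) {ν u : Fin 2 → ℝ}
    (h : ν ⬝ᵥ u = 0) : (F + vecMulVec a ν) *ᵥ u = F *ᵥ u := by
  simp [add_mulVec, vecMulVec_mulVec, h]

lemma abs_dotProduct_le_of_add_vecMulVec_mem_calN {s a ν : Fin 2 → ℝ} {F : M2}
    (h : F + vecMulVec a ν ∈ calN s) :
    |s ⬝ᵥ ν| ≤ enorm2 (F *ᵥ perp ν) := by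
  obtain ⟨hdet, hnorm⟩ := h
  have hperp : (F + vecMulVec a ν) *ᵥ perp ν = F *ᵥ perp ν :=
    add_vecMulVec_mulVec_of_dotProduct_eq_zero F a (dotProduct_perp_self ν)
  have harea : perp ((F + vecMulVec a ν) *ᵥ s) ⬝ᵥ F *ᵥ perp ν = s ⬝ᵥ ν := by
    rw [← hperp, perp_mulVec_dotProduct_mulVec, hdet, one_mul, perp_dotProduct_perp]
  calc |s ⬝ᵥ ν| ≤ enorm2 ((F + vecMulVec a ν) *ᵥ s) * enorm2 (F *ᵥ perp ν) := by
        rw [← harea, ← enorm2_perp ((F + vecMulVec a ν) *ᵥ s)]; exact abs_dotProduct_le _ _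
    _ ≤ enorm2 (F *ᵥ perp ν) := mul_le_of_le_one_left (enorm2_nonneg _) hnorm

lemma isClosed_setOf_abs_dotProduct_le (s : Fin 2 → ℝ) (F : M2) :
    IsClosed {ν : Fin 2 → ℝ | |s ⬝ᵥ ν| ≤ enorm2 (F *ᵥ perp ν)} :=
  isClosed_le (by fun_prop) (continuous_enorm2.comp (by fun_prop))

lemma abs_dotProduct_le_of_enorm2_eq_one {s : Fin 2 → ℝ} {F : M2}
    (h : ∀ ν, enorm2 ν = 1 → |s ⬝ᵥ ν| ≤ enorm2 (F *ᵥ perp ν)) (ν : Fin 2 → ℝ) :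
    |s ⬝ᵥ ν| ≤ enorm2 (F *ᵥ perp ν) := by
  by_cases hν : ν = 0
  · simpa [hν] using enorm2_nonneg _
  have hpos : 0 < enorm2 ν := by rw [enorm2_eq_norm]; simpa using hν
  have hunit : enorm2 ((enorm2 ν)⁻¹ • ν) = 1 := by
    rw [enorm2_smul, abs_inv, abs_of_pos hpos, inv_mul_cancel₀ hpos.ne']
  have := h _ hunit
  rw [dotProduct_smul, perp_smul, mulVec_smul, enorm2_smul, smul_eq_mul, abs_mul, abs_inv,
    abs_of_pos hpos] at this
  exact le_of_mul_le_mul_left this (inv_pos.2 hpos)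

lemma enorm2_mulVec_le_one {s : Fin 2 → ℝ} {F : M2} (hF : F.det = 1)
    (h : ∀ ν, |s ⬝ᵥ ν| ≤ enorm2 (F *ᵥ perp ν)) : enorm2 (F *ᵥ s) ≤ 1 := by
  have := h ((F *ᵥ s) ᵥ* F)
  rw [mulVec_perp_vecMul, hF, one_smul, enorm2_perp, dotProduct_comm, ← dotProduct_mulVec,
    dotProduct_self_eq_enorm2_sq, abs_of_nonneg (by positivity)] at this
  nlinarith [enorm2_nonneg (F *ᵥ s)]

lemma exists_add_vecMulVec_perp_mem_calN_iff {s : Fin 2 → ℝ} {F : M2} (hF : F.det = 1) :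
    (∃ a, F + vecMulVec a (perp s) ∈ calN s) ↔ enorm2 (F *ᵥ s) ≤ 1 := by
  refine ⟨fun ⟨a, _, hnorm⟩ => ?_, fun h => ⟨0, by rw [zero_vecMulVec, add_zero]; exact ⟨hF, h⟩⟩⟩
  rwa [add_vecMulVec_mulVec_of_dotProduct_eq_zero F a
    (by rw [dotProduct_comm]; exact dotProduct_perp_self s)] at hnorm

end RankOneCompatibility

open RankOneCompatibility in
theorem stmt5_general (s : Fin 2 → ℝ) (F : M2) (hF : F.det = 1)
    (D : Set (Fin 2 → ℝ)) (hdense : {ν : Fin 2 → ℝ | enorm2 ν = 1} ⊆ closure D) :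
    (∃ a : Fin 2 → ℝ, F + vecMulVec a (perp s) ∈ calN s) ↔
      ∀ ν ∈ D, ∃ a : Fin 2 → ℝ, F + vecMulVec a ν ∈ calN s := by
  rw [exists_add_vecMulVec_perp_mem_calN_iff hF]
  refine ⟨fun h _ _ => ⟨0, by rw [zero_vecMulVec, add_zero]; exact ⟨hF, h⟩⟩,
    fun h => enorm2_mulVec_le_one hF ?_⟩
  refine abs_dotProduct_le_of_enorm2_eq_one fun ν hν => ?_
  have hD : D ⊆ {ν | |s ⬝ᵥ ν| ≤ enorm2 (F *ᵥ perp ν)} := fun ν hν =>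
    let ⟨_, ha⟩ := h ν hν
    abs_dotProduct_le_of_add_vecMulVec_mem_calN ha
  exact closure_minimal hD (isClosed_setOf_abs_dotProduct_le s F) (hdense hν)

/-- F is s⊥-compatible with 𝓝_s iff F is ν-compatible with 𝓝_s for every ν
in a dense subset 𝓓 of the unit circle. -/
theorem stmt5 (s : Fin 2 → ℝ) (hs : enorm2 s = 1) (F : M2) (hF : F.det = 1)
    (D : Set (Fin 2 → ℝ)) (hD : D ⊆ {ν : Fin 2 → ℝ | enorm2 ν = 1})
    (hdense : {ν : Fin 2 → ℝ | enorm2 ν = 1} ⊆ closure D) :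
    (∃ a : Fin 2 → ℝ, F + vecMulVec a (perp s) ∈ calN s) ↔
      ∀ ν ∈ D, ∃ a : Fin 2 → ℝ, F + vecMulVec a ν ∈ calN s :=
  stmt5_general s F hF D hdense
end
end

section
/- Let θ ∈ (0,π) and F ∈ ℝ^{2×2}. Then F ∈ 𝓝 and F R_θ ∈ 𝓝 if and only if there exist S ∈ SO(2), β ∈ [sin θ, 1] and γ ∈ ℝ with γ₋(θ,β) ≤ γ ≤ γ₊(θ,β) such that F = S ψ(β,γ), where ψ(β,γ) is the 2×2 matrix with rows (β, γ) and (0, 1/β), and γ_±(θ,β) = −β·(cos θ/sin θ) ± √(1/sin²θ − 1/β²). -/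
/-!
Gram–Schmidt on the columns writes every `F` with `det F = 1` as `R_φ ψ(β,γ)` with `β = ‖F e1‖ > 0`.
Left rotations preserve `𝓝`, and `ψ(β,γ) R_θ e1 = (β cos θ + γ sin θ, sin θ / β)`, so the two
conditions become `β ≤ 1` and `(β cos θ + γ sin θ)² + sin²θ / β² ≤ 1`. Dividing the latter by
`sin²θ` turns it into `(γ + β cot θ)² ≤ 1/sin²θ − 1/β²`, which has solutions `γ` exactly when
`sin θ ≤ β`, and then these form the interval `[γ₋(θ,β), γ₊(θ,β)]`.
-/

open Matrix Real Set MeasureTheory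

noncomputable section

/-- ψ(β,γ) = matrix with rows (β, γ) and (0, 1/β). -/
def psiM (β γ : ℝ) : M2 := !![β, γ; 0, 1 / β]

/-- γ₋(θ,β) = −β cot θ − √(1/sin²θ − 1/β²). -/
def gammaMinus (θ β : ℝ) : ℝ :=
  -β * (Real.cos θ / Real.sin θ) - Real.sqrt (1 / (Real.sin θ) ^ 2 - 1 / β ^ 2)

/-- γ₊(θ,β) = −β cot θ + √(1/sin²θ − 1/β²). -/
def gammaPlus (θ β : ℝ) : ℝ :=
  -β * (Real.cos θ / Real.sin θ) + Real.sqrt (1 / (Real.sin θ) ^ 2 - 1 / β ^ 2)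

lemma det_psiM {β : ℝ} (hβ : β ≠ 0) (γ : ℝ) : (psiM β γ).det = 1 := by
  simp [psiM, det_fin_two_of, hβ]

lemma enorm2_vec2 (x y : ℝ) : enorm2 ![x, y] = √(x ^ 2 + y ^ 2) := rfl

lemma enorm2_rot_mulVec (φ : ℝ) (v : Fin 2 → ℝ) : enorm2 (rot φ *ᵥ v) = enorm2 v := by
  have hv : rot φ *ᵥ v = ![cos φ * v 0 - sin φ * v 1, sin φ * v 0 + cos φ * v 1] := by
    ext i; fin_cases i <;> simp [rot, mulVec, dotProduct, Fin.sum_univ_two, sub_eq_add_neg]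
  rw [hv, enorm2_vec2, enorm2]
  congr 1
  linear_combination (v 0 ^ 2 + v 1 ^ 2) * cos_sq_add_sin_sq φ

lemma rot_mul_mem_calN_iff (φ : ℝ) (s : Fin 2 → ℝ) (F : M2) :
    rot φ * F ∈ calN s ↔ F ∈ calN s := by
  simp only [calN, Set.mem_ofPred_eq, det_mul, det_rot, one_mul, ← mulVec_mulVec,
    enorm2_rot_mulVec]

lemma psiM_mem_calN_e1_iff {β : ℝ} (hβ : 0 < β) (γ : ℝ) : psiM β γ ∈ calN e1 ↔ β ≤ 1 := by
  have hv : psiM β γ *ᵥ e1 = ![β, 0] := by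
    ext i; fin_cases i <;> simp [psiM, e1, mulVec, dotProduct, Fin.sum_univ_two]
  simp only [calN, Set.mem_ofPred_eq, det_psiM hβ.ne', true_and, hv, enorm2_vec2]
  simp [sqrt_sq hβ.le]

lemma psiM_mul_rot_mem_calN_e1_iff {β : ℝ} (hβ : β ≠ 0) (γ θ : ℝ) :
    psiM β γ * rot θ ∈ calN e1 ↔ (β * cos θ + γ * sin θ) ^ 2 + (sin θ / β) ^ 2 ≤ 1 := by
  have hv : (psiM β γ * rot θ) *ᵥ e1 = ![β * cos θ + γ * sin θ, sin θ / β] := by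
    ext i; fin_cases i <;> simp [psiM, rot, e1, mulVec, dotProduct, Fin.sum_univ_two, mul_apply,
      div_eq_inv_mul]
  simp only [calN, Set.mem_ofPred_eq, det_mul, det_psiM hβ, det_rot, mul_one, true_and, hv,
    enorm2_vec2, sqrt_le_one]

lemma exists_eq_rot_mul_psiM {F : M2} (hF : F.det = 1) :
    ∃ φ β γ : ℝ, 0 < β ∧ F = rot φ * psiM β γ := by
  obtain ⟨β, φ, hβ, ha, hc⟩ : ∃ β φ : ℝ, 0 < β ∧ β * cos φ = F 0 0 ∧ β * sin φ = F 1 0 := by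
    set z : ℂ := ⟨F 0 0, F 1 0⟩
    have hz : z ≠ 0 := by
      intro h
      have h0 : F 0 0 = 0 := congrArg Complex.re h
      have h1 : F 1 0 = 0 := congrArg Complex.im h
      simp [det_fin_two, h0, h1] at hF
    exact ⟨‖z‖, z.arg, norm_pos_iff.2 hz, z.norm_mul_cos_arg, z.norm_mul_sin_arg⟩
  have hinv : β⁻¹ = cos φ * F 1 1 - sin φ * F 0 1 := by
    refine (eq_inv_of_mul_eq_one_left ?_).symm
    rw [det_fin_two, ← ha, ← hc] at hF
    linear_combination hF
  refine ⟨φ, β, cos φ * F 0 1 + sin φ * F 1 1, hβ, ?_⟩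
  ext i j
  fin_cases i <;> fin_cases j <;> simp [rot, psiM, mul_apply, Fin.sum_univ_two, hinv]
  · linear_combination -ha
  · linear_combination -F 0 1 * cos_sq_add_sin_sq φ
  · linear_combination -hc
  · linear_combination -F 1 1 * cos_sq_add_sin_sq φ

lemma sq_add_sq_le_one_iff_gammaMinus_le_le_gammaPlus {θ β : ℝ} (hs : 0 < sin θ) (hβ : 0 < β)
    (γ : ℝ) : (β * cos θ + γ * sin θ) ^ 2 + (sin θ / β) ^ 2 ≤ 1 ↔
      sin θ ≤ β ∧ gammaMinus θ β ≤ γ ∧ γ ≤ gammaPlus θ β := by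
  set D := 1 / sin θ ^ 2 - 1 / β ^ 2
  have hD : 0 ≤ D ↔ sin θ ≤ β := by
    rw [sub_nonneg, one_div_le_one_div (by positivity) (by positivity),
      pow_le_pow_iff_left₀ hs.le hβ.le two_ne_zero]
  have hfactor : (β * cos θ + γ * sin θ) ^ 2 + (sin θ / β) ^ 2 - 1
      = sin θ ^ 2 * ((γ + β * (cos θ / sin θ)) ^ 2 - D) := by
    simp only [D]
    field_simp
    ring
  have hiff : (β * cos θ + γ * sin θ) ^ 2 + (sin θ / β) ^ 2 ≤ 1 ↔
      (γ + β * (cos θ / sin θ)) ^ 2 ≤ D := by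
    rw [← sub_nonpos, hfactor, ← sub_nonpos (b := D)]
    exact ⟨fun h ↦ nonpos_of_mul_nonpos_right h (pow_pos hs 2),
      mul_nonpos_of_nonneg_of_nonpos (sq_nonneg _)⟩
  rw [hiff]
  unfold gammaMinus gammaPlus
  constructor
  · intro h
    have hD0 : 0 ≤ D := (sq_nonneg _).trans h
    obtain ⟨hlo, hhi⟩ := (Real.sq_le hD0).1 h
    exact ⟨hD.1 hD0, by linarith, by linarith⟩
  · rintro ⟨hsβ, hlo, hhi⟩
    exact (Real.sq_le (hD.2 hsβ)).2 ⟨by linarith, by linarith⟩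

/-- Explicit characterization of 𝓝 ∩ 𝓝 R_θᵀ. -/
theorem stmt7 (θ : ℝ) (hθ : θ ∈ Set.Ioo 0 Real.pi) (F : M2) :
    (F ∈ calN e1 ∧ F * rot θ ∈ calN e1) ↔
      ∃ S ∈ SO2, ∃ β γ : ℝ, Real.sin θ ≤ β ∧ β ≤ 1 ∧
        gammaMinus θ β ≤ γ ∧ γ ≤ gammaPlus θ β ∧ F = S * psiM β γ := by
  have hs : 0 < sin θ := sin_pos_of_pos_of_lt_pi hθ.1 hθ.2
  constructor
  · rintro ⟨hF, hFθ⟩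
    obtain ⟨φ, β, γ, hβ, rfl⟩ := exists_eq_rot_mul_psiM hF.1
    rw [rot_mul_mem_calN_iff, psiM_mem_calN_e1_iff hβ] at hF
    rw [mul_assoc, rot_mul_mem_calN_iff, psiM_mul_rot_mem_calN_e1_iff hβ.ne',
      sq_add_sq_le_one_iff_gammaMinus_le_le_gammaPlus hs hβ] at hFθ
    obtain ⟨hsβ, hlo, hhi⟩ := hFθ
    exact ⟨rot φ, ⟨φ, rfl⟩, β, γ, hsβ, hF, hlo, hhi, rfl⟩
  · rintro ⟨_, ⟨φ, rfl⟩, β, γ, hsβ, hβ1, hlo, hhi, rfl⟩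
    have hβ : 0 < β := hs.trans_le hsβ
    rw [mul_assoc, rot_mul_mem_calN_iff, rot_mul_mem_calN_iff, psiM_mem_calN_e1_iff hβ,
      psiM_mul_rot_mem_calN_e1_iff hβ.ne', sq_add_sq_le_one_iff_gammaMinus_le_le_gammaPlus hs hβ]
    exact ⟨hβ1, hsβ, hlo, hhi⟩
end
end

section
/- Let R ∈ SO(2) with R ≠ Id and R ≠ −Id. Then a matrix F ∈ ℝ^{2×2} satisfies F R^k ∈ 𝓝 for every natural number k ≥ 0 if and only if F ∈ SO(2); that is, ⋂_{k=0}^{∞} 𝓝 (R^k)ᵀ = SO(2). -/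
open Matrix Real Set MeasureTheory

noncomputable section

/-! Writing `F = !![p, q; r, s]` with `det F = 1`, the quantity `‖F R_φ e1‖²` equals
`m + D cos 2φ + C sin 2φ` with `m = (p² + q² + r² + s²) / 2 ≥ 1`. Along `φ = kθ` the oscillating
part is the real part of `(D - C i) e^{2ikθ}`, and `e^{2iθ} ≠ 1` because `R ≠ ±Id`, so its
partial sums stay bounded; it therefore cannot stay below `1 - m` for all `k` unless `m = 1`.
But `m = 1` and `det F = 1` force `s = p`, `q = -r`, `p² + r² = 1`, i.e. `F ∈ SO(2)`. -/

lemma rot_mul (a b : ℝ) : rot a * rot b = rot (a + b) := by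
  ext i j
  fin_cases i <;> fin_cases j <;>
    simp [rot, Matrix.mul_apply, Real.cos_add, Real.sin_add] <;> ring

lemma rot_zero : rot 0 = 1 := by
  ext i j
  fin_cases i <;> fin_cases j <;> simp [rot]

lemma rot_pow (θ : ℝ) (k : ℕ) : rot θ ^ k = rot (k * θ) := by
  induction k with
  | zero => simp [rot_zero]
  | succ k ih => rw [pow_succ, ih, rot_mul]; push_cast; ring_nf

lemma rot_mulVec_e1 (θ : ℝ) : rot θ *ᵥ e1 = ![Real.cos θ, Real.sin θ] := by
  ext i
  fin_cases i <;> simp [rot, e1]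

lemma rot_mem_calN_e1 (θ : ℝ) : rot θ ∈ calN e1 := by
  refine ⟨?_, ?_⟩
  · simp [rot, Matrix.det_fin_two_of, ← sq, Real.cos_sq_add_sin_sq]
  · show enorm2 (rot θ *ᵥ e1) ≤ 1
    rw [rot_mulVec_e1]
    simp [enorm2]

lemma rot_eq_one_or_neg_one_of_sin_eq_zero {θ : ℝ} (h : Real.sin θ = 0) :
    rot θ = 1 ∨ rot θ = -1 := by
  rcases Real.sin_eq_zero_iff_cos_eq.mp h with hc | hc
  · left; ext i j; fin_cases i <;> fin_cases j <;> simp [rot, h, hc]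
  · right; ext i j; fin_cases i <;> fin_cases j <;> simp [rot, h, hc]

lemma mem_SO2_of_det_eq_one_of_sum_sq_le_two {p q r s : ℝ} (hdet : p * s - q * r = 1)
    (hsq : p ^ 2 + q ^ 2 + r ^ 2 + s ^ 2 ≤ 2) : !![p, q; r, s] ∈ SO2 := by
  -- `(p - s)² + (q + r)² = p² + q² + r² + s² - 2 (p s - q r) ≤ 0`
  have hs : p = s := by nlinarith [sq_nonneg (p - s), sq_nonneg (q + r)]
  have hq : q = -r := by nlinarith [sq_nonneg (p - s), sq_nonneg (q + r)]
  subst hs hq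
  set w : ℂ := ⟨p, r⟩
  have hw : ‖w‖ = 1 := by
    rw [Complex.norm_def, Complex.normSq_mk, Real.sqrt_eq_one]; linarith
  have hcos := Complex.norm_mul_cos_arg w
  have hsin := Complex.norm_mul_sin_arg w
  rw [hw, one_mul] at hcos hsin
  exact ⟨w.arg, by ext i j; fin_cases i <;> fin_cases j <;> simp [rot, hcos, hsin, w]⟩

lemma norm_geom_sum_le {z : ℂ} (hz1 : z ≠ 1) (hz : ‖z‖ ≤ 1) (n : ℕ) :
    ‖∑ k ∈ Finset.range n, z ^ k‖ ≤ 2 / ‖z - 1‖ := by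
  rw [geom_sum_eq hz1, norm_div]
  gcongr
  calc ‖z ^ n - 1‖ ≤ ‖z‖ ^ n + 1 := by simpa [norm_pow] using norm_sub_le (z ^ n) 1
    _ ≤ 2 := by linarith [pow_le_one₀ (norm_nonneg z) hz (n := n)]

lemma exists_neg_lt_re_mul_pow (w : ℂ) {z : ℂ} (hz1 : z ≠ 1) (hz : ‖z‖ ≤ 1) {ε : ℝ}
    (hε : 0 < ε) : ∃ k : ℕ, -ε < (w * z ^ k).re := by
  by_contra! hle
  -- the partial sums of `w z^k` are bounded, but their real parts would decrease like `-n ε`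
  have hbound (n : ℕ) : n * ε ≤ ‖w‖ * (2 / ‖z - 1‖) :=
    calc n * ε = -∑ _k ∈ Finset.range n, -ε := by simp
      _ ≤ -∑ k ∈ Finset.range n, (w * z ^ k).re := by
          gcongr with k; exact hle k
      _ = -(w * ∑ k ∈ Finset.range n, z ^ k).re := by rw [Finset.mul_sum, Complex.re_sum]
      _ ≤ ‖w * ∑ k ∈ Finset.range n, z ^ k‖ := by
          linarith [Complex.abs_re_le_norm (w * ∑ k ∈ Finset.range n, z ^ k),
            neg_abs_le (w * ∑ k ∈ Finset.range n, z ^ k).re]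
      _ ≤ ‖w‖ * (2 / ‖z - 1‖) := by
          rw [norm_mul]; gcongr; exact norm_geom_sum_le hz1 hz n
  obtain ⟨n, hn⟩ := exists_nat_gt (‖w‖ * (2 / ‖z - 1‖) / ε)
  rw [div_lt_iff₀ hε] at hn
  linarith [hbound n]

lemma exists_neg_lt_mul_cos_add_mul_sin (D C : ℝ) {α : ℝ} (hα : Real.cos α ≠ 1) {ε : ℝ}
    (hε : 0 < ε) : ∃ k : ℕ, -ε < D * Real.cos (k * α) + C * Real.sin (k * α) := by
  set z := Complex.exp (α * Complex.I)
  have hz1 : z ≠ 1 := fun h => hα (by simpa [z] using congrArg Complex.re h)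
  obtain ⟨k, hk⟩ := exists_neg_lt_re_mul_pow (D - C * Complex.I) hz1
    (Complex.norm_exp_ofReal_mul_I α).le hε
  refine ⟨k, ?_⟩
  rw [← Complex.exp_nat_mul, ← mul_assoc, ← Complex.ofReal_natCast, ← Complex.ofReal_mul,
    Complex.mul_re, Complex.exp_ofReal_mul_I_re, Complex.exp_ofReal_mul_I_im] at hk
  simpa using hk

lemma sq_add_sq_eq_mean_add_double_angle (p q r s φ : ℝ) :
    (p * Real.cos φ + q * Real.sin φ) ^ 2 + (r * Real.cos φ + s * Real.sin φ) ^ 2 =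
      (p ^ 2 + q ^ 2 + r ^ 2 + s ^ 2) / 2 +
        ((p ^ 2 + r ^ 2 - q ^ 2 - s ^ 2) / 2 * Real.cos (2 * φ) +
          (p * q + r * s) * Real.sin (2 * φ)) := by
  rw [Real.cos_two_mul, Real.sin_two_mul]
  linear_combination (q ^ 2 + s ^ 2) * Real.sin_sq_add_cos_sq φ

lemma mem_SO2_of_forall_enorm2_mulVec_rot_le_one {θ : ℝ} (hθ : Real.sin θ ≠ 0) {F : M2}
    (hdet : F.det = 1) (h : ∀ k : ℕ, enorm2 ((F * rot (k * θ)) *ᵥ e1) ≤ 1) : F ∈ SO2 := by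
  obtain ⟨p, q, r, s, rfl⟩ : ∃ p q r s, F = !![p, q; r, s] := ⟨_, _, _, _, F.eta_fin_two⟩
  have hcos : Real.cos (2 * θ) ≠ 1 := by
    intro h
    rw [Real.cos_two_mul, Real.cos_sq'] at h
    exact hθ (pow_eq_zero_iff two_ne_zero |>.mp (by linarith))
  have hquad (k : ℕ) : (p ^ 2 + q ^ 2 + r ^ 2 + s ^ 2) / 2 +
      ((p ^ 2 + r ^ 2 - q ^ 2 - s ^ 2) / 2 * Real.cos (k * (2 * θ)) +
        (p * q + r * s) * Real.sin (k * (2 * θ))) ≤ 1 := by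
    have hk := h k
    rw [← Matrix.mulVec_mulVec, rot_mulVec_e1, enorm2, Real.sqrt_le_one] at hk
    rw [mul_left_comm, ← sq_add_sq_eq_mean_add_double_angle]
    simp only [Matrix.mulVec_fin_two, Matrix.of_apply, Matrix.cons_val_zero, Matrix.cons_val_one,
      Matrix.cons_val', Matrix.empty_val', Matrix.cons_val_fin_one] at hk
    linarith
  refine mem_SO2_of_det_eq_one_of_sum_sq_le_two (by simpa [Matrix.det_fin_two_of] using hdet) ?_
  by_contra! hgt
  obtain ⟨k, hk⟩ := exists_neg_lt_mul_cos_add_mul_sin ((p ^ 2 + r ^ 2 - q ^ 2 - s ^ 2) / 2)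
    (p * q + r * s) hcos (ε := (p ^ 2 + q ^ 2 + r ^ 2 + s ^ 2) / 2 - 1) (by linarith)
  linarith [hquad k]

/-- For R ∈ SO(2) with R ≠ ±Id, ⋂_{k=0}^∞ 𝓝 (R^k)ᵀ = SO(2). -/
theorem stmt11 (R : M2) (hR : R ∈ SO2) (h1 : R ≠ 1) (h2 : R ≠ -1) :
    {F : M2 | ∀ k : ℕ, F * R ^ k ∈ calN e1} = SO2 := by
  obtain ⟨θ, rfl⟩ := hR
  have hsin : Real.sin θ ≠ 0 := fun h => (rot_eq_one_or_neg_one_of_sin_eq_zero h).elim h1 h2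
  ext F
  constructor
  · intro hF
    refine mem_SO2_of_forall_enorm2_mulVec_rot_le_one hsin ?_ fun k => ?_
    · simpa using (hF 0).1
    · simpa [rot_pow] using (hF k).2
  · rintro ⟨φ, rfl⟩ k
    rw [rot_pow, rot_mul]
    exact rot_mem_calN_e1 _
end
end

section
/- Let N ≥ 2, let s₁,…,s_N ∈ ℝ² be unit vectors such that s_i and s_j are linearly independent for at least one pair i ≠ j, and let λ₁,…,λ_N > 0 with λ₁ + … + λ_N = 1. Then the Minkowski combination {λ₁ F₁ + … + λ_N F_N : F_i ∈ ℝ^{2×2} with ‖F_i s_i‖ ≤ 1 for all i} equals all of ℝ^{2×2}. -/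
/-!
Every `G` even splits as `∑ λₖ Fₖ` with `Fₖ sₖ = 0`. If `sᵢ, sⱼ` are independent, the projections
of `ℝ² = span {sⱼ} ⊕ span {sᵢ}` give `1 = P + Q` with `P sᵢ = 0` and `Q sⱼ = 0`; take
`Fᵢ = λᵢ⁻¹ G P`, `Fⱼ = λⱼ⁻¹ G Q` and `Fₖ = 0` otherwise.
-/

open Matrix Real Set MeasureTheory

noncomputable section

lemma enorm2_zero : enorm2 0 = 0 := by
  simp [enorm2]

lemma exists_add_eq_one_mulVec_eq_zero {K : Type*} [Field K] {a b : Fin 2 → K}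
    (h : LinearIndependent K ![a, b]) :
    ∃ P Q : Matrix (Fin 2) (Fin 2) K, P *ᵥ a = 0 ∧ Q *ᵥ b = 0 ∧ P + Q = 1 := by
  let B := basisOfLinearIndependentOfCardEqFinrank h (by simp)
  have hB : ⇑B = ![a, b] := coe_basisOfLinearIndependentOfCardEqFinrank h _
  refine ⟨LinearMap.toMatrix' ((B.coord 1).smulRight b),
    LinearMap.toMatrix' ((B.coord 0).smulRight a), ?_, ?_, ?_⟩
  · have : B 0 = a := by simp [hB]
    simp [LinearMap.toMatrix'_mulVec, ← this]
  · have : B 1 = b := by simp [hB]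
    simp [LinearMap.toMatrix'_mulVec, ← this]
  · rw [← map_add, ← LinearMap.toMatrix'_id]
    refine congrArg _ (LinearMap.ext fun v => ?_)
    simpa [hB, add_comm] using B.sum_repr v

lemma exists_sum_eq_one_mulVec_eq_zero {K ι : Type*} [Field K] [Fintype ι] [DecidableEq ι]
    {s : ι → Fin 2 → K} {i j : ι} (hij : i ≠ j) (h : LinearIndependent K ![s i, s j]) :
    ∃ R : ι → Matrix (Fin 2) (Fin 2) K, ∑ k, R k = 1 ∧ ∀ k, R k *ᵥ s k = 0 := by
  obtain ⟨P, Q, hP, hQ, hPQ⟩ := exists_add_eq_one_mulVec_eq_zero h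
  refine ⟨Pi.single i P + Pi.single j Q, ?_, fun k => ?_⟩
  · simp [Finset.sum_add_distrib, Finset.sum_pi_single', hPQ]
  · rcases eq_or_ne k i with rfl | hki
    · simp [hij, hP]
    · rcases eq_or_ne k j with rfl | hkj
      · simp [hki, hQ]
      · simp [hki, hkj]

theorem stmt14_general (N : ℕ) (s : Fin N → Fin 2 → ℝ)
    (hind : ∃ i j, i ≠ j ∧ LinearIndependent ℝ ![s i, s j])
    (lam : Fin N → ℝ) (hlam : ∀ i, 0 < lam i) :
    {G : M2 | ∃ F : Fin N → M2, (∀ i, enorm2 ((F i).mulVec (s i)) ≤ 1) ∧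
      G = ∑ i, lam i • F i} = Set.univ := by
  obtain ⟨i, j, hij, hli⟩ := hind
  obtain ⟨R, hR, hRs⟩ := exists_sum_eq_one_mulVec_eq_zero hij hli
  refine Set.eq_univ_of_forall fun G => ⟨fun k => (lam k)⁻¹ • (G * R k), fun k => ?_, ?_⟩
  · rw [smul_mulVec, ← mulVec_mulVec, hRs, mulVec_zero, smul_zero, enorm2_zero]
    exact zero_le_one
  · simp [smul_smul, (hlam _).ne', ← Finset.mul_sum, hR]

/-- The Minkowski combination ∑ λᵢ {F : ‖F sᵢ‖ ≤ 1} is all of ℝ^{2×2}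
whenever some pair of the unit vectors sᵢ is linearly independent. -/
theorem stmt14 (N : ℕ) (hN : 2 ≤ N) (s : Fin N → Fin 2 → ℝ)
    (hs : ∀ i, enorm2 (s i) = 1)
    (hind : ∃ i j, i ≠ j ∧ LinearIndependent ℝ ![s i, s j])
    (lam : Fin N → ℝ) (hlam : ∀ i, 0 < lam i) (hsum : ∑ i, lam i = 1) :
    {G : M2 | ∃ F : Fin N → M2, (∀ i, enorm2 ((F i).mulVec (s i)) ≤ 1) ∧
      G = ∑ i, lam i • F i} = Set.univ :=
  stmt14_general N s hind lam hlam
end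
end
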